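/- Let X_1, X_2, W, F_1,...,F_r be finite random variables such that for every i in [1:r] the Markov chain F_i - F_{[1:i-1]} X_{(i)_2} - X_{(i+1)_2} holds. Then Sum_{i=1}^r ( I(F_i; X_{(i+1)_2} | F_{[1:i-1]}) - I(F_i; W | F_{[1:i-1]}) ) = I(X_1;X_2) - I(X_1;X_2 | F_{[1:r]}) - I(F_{[1:r]}; W). In particular, taking W = (Z,S), the achievable key rate of the simultaneous simulation and key-generation theorem satisfies R_0 + Sum_{i=1}^r ( I(F_i; X_{(i+1)_2} | F_{[1:i-1]}) - I(F_i; Z,S | F_{[1:i-1]}) ) = R_0 + I(X_1;X_2) - I(X_1;X_2|F_{[1:r]}) - I(F_{[1:r]}; Z,S). -/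

import Mathlib

open scoped BigOperators

namespace InfoTheory

variable {Ω : Type*} [Fintype Ω]

/-- `p` is a probability mass function on the finite type `Ω`. -/
def IsPMF (p : Ω → ℝ) : Prop := (∀ ω, 0 ≤ p ω) ∧ ∑ ω, p ω = 1

/-- Distribution of the random variable `A` under `p`. -/
noncomputable def rvDist {α : Type*} [Fintype α] [DecidableEq α]
    (p : Ω → ℝ) (A : Ω → α) (a : α) : ℝ :=
  ∑ ω, if A ω = a then p ω else 0

/-- Shannon entropy (base 2) of the random variable `A` under `p`. -/
noncomputable def entH {α : Type*} [Fintype α] [DecidableEq α]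
    (p : Ω → ℝ) (A : Ω → α) : ℝ :=
  -∑ a, rvDist p A a * Real.logb 2 (rvDist p A a)

/-- Conditional entropy `H(A|B)`. -/
noncomputable def condH {α β : Type*} [Fintype α] [DecidableEq α] [Fintype β] [DecidableEq β]
    (p : Ω → ℝ) (A : Ω → α) (B : Ω → β) : ℝ :=
  entH p (fun ω => (A ω, B ω)) - entH p B

/-- Mutual information `I(A;B)`. -/
noncomputable def mi {α β : Type*} [Fintype α] [DecidableEq α] [Fintype β] [DecidableEq β]
    (p : Ω → ℝ) (A : Ω → α) (B : Ω → β) : ℝ :=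
  entH p A + entH p B - entH p (fun ω => (A ω, B ω))

/-- Conditional mutual information `I(A;B|C)`. -/
noncomputable def cmi {α β γ : Type*} [Fintype α] [DecidableEq α] [Fintype β] [DecidableEq β]
    [Fintype γ] [DecidableEq γ]
    (p : Ω → ℝ) (A : Ω → α) (B : Ω → β) (C : Ω → γ) : ℝ :=
  condH p A C + condH p B C - condH p (fun ω => (A ω, B ω)) C

/-- Markov chain `A - B - C`: `A` and `C` are conditionally independent given `B`. -/
def Markov {α β γ : Type*} [Fintype α] [DecidableEq α] [Fintype β] [DecidableEq β]
    [Fintype γ] [DecidableEq γ]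
    (p : Ω → ℝ) (A : Ω → α) (B : Ω → β) (C : Ω → γ) : Prop :=
  ∀ a b c, rvDist p (fun ω => ((A ω, B ω), C ω)) ((a, b), c) * rvDist p B b
    = rvDist p (fun ω => (A ω, B ω)) (a, b) * rvDist p (fun ω => (B ω, C ω)) (b, c)

/-- Total variation distance between two pmfs on the finite type `α`. -/
noncomputable def TV {α : Type*} [Fintype α] (p q : α → ℝ) : ℝ :=
  (∑ a, |p a - q a|) / 2

/-- The prefix `F_{[1:k]}` of a finite family of random variables, encoded by replacing
the coordinates beyond `k` by `none`. -/
def Fpre {r : ℕ} {𝓕 : Fin r → Type*} (F : ∀ i : Fin r, Ω → 𝓕 i) (k : ℕ) :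
    Ω → ∀ j : Fin r, Option (𝓕 j) :=
  fun ω j => if (j : ℕ) < k then some (F j ω) else none

/-- The full tuple `F_{[1:r]}`. -/
def Ffull {r : ℕ} {𝓕 : Fin r → Type*} (F : ∀ i : Fin r, Ω → 𝓕 i) :
    Ω → ∀ j : Fin r, 𝓕 j :=
  fun ω j => F j ω

end InfoTheory

open InfoTheory

/-!
Each round telescopes. Writing `C` for the transcript before round `i`, the chain rule expands
`I(F_i, X₁; X₂ | C)` in two orders and the Markov condition kills `I(F_i; X₂ | C, X₁)` (roles of
`X₁`, `X₂` swapped in even rounds), so the `X`-term of round `i` equals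
`I(X₁;X₂|F_{[1:i-1]}) - I(X₁;X₂|F_{[1:i]})`; similarly
`I(F_i;W|F_{[1:i-1]}) = I(F_{[1:i]};W) - I(F_{[1:i-1]};W)`. Summing over the rounds leaves the
boundary terms, and the empty transcript `F_{[1:0]}` is constant.
-/

namespace InfoTheory

section Transcript

variable {Ω : Type*} {r : ℕ} {𝓕 : Fin r → Type*} (F : ∀ i : Fin r, Ω → 𝓕 i)

theorem fpre_zero_eq (ω ω' : Ω) : Fpre F 0 ω = Fpre F 0 ω' := by
  funext j
  simp [Fpre]

theorem fpre_succ_eq_iff (i : Fin r) (ω ω' : Ω) :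
    Fpre F (i + 1) ω = Fpre F (i + 1) ω' ↔ F i ω = F i ω' ∧ Fpre F i ω = Fpre F i ω' := by
  simp only [Fpre, funext_iff]
  constructor
  · intro h
    refine ⟨by simpa using h i, fun j => ?_⟩
    have := h j
    split_ifs at this ⊢ <;> first | omega | rfl
  · rintro ⟨hi, h⟩ j
    have := h j
    rcases lt_trichotomy j i with hj | rfl | hj
    · simp_all [show (j : ℕ) < i + 1 by omega]
    · simp [hi]
    · simp [show ¬ (j : ℕ) < i + 1 by omega]

end Transcript

variable {Ω α β γ δ : Type*} [Fintype Ω] [Fintype α] [DecidableEq α] [Fintype β] [DecidableEq β]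
  [Fintype γ] [DecidableEq γ] [Fintype δ] [DecidableEq δ] {p : Ω → ℝ}

theorem rvDist_congr {U : Ω → α} {V : Ω → β} {a : α} {b : β} (h : ∀ ω, U ω = a ↔ V ω = b) :
    rvDist p U a = rvDist p V b := by
  simp only [rvDist, h]

theorem rvDist_apply_self_pos (hp : ∀ ω, 0 ≤ p ω) (U : Ω → α) {ω : Ω} (hω : 0 < p ω) :
    0 < rvDist p U (U ω) :=
  hω.trans_le <| by
    simpa [rvDist] using Finset.single_le_sum (f := fun ω' => if U ω' = U ω then p ω' else 0)
      (fun ω' _ => ite_nonneg (hp ω') le_rfl) (Finset.mem_univ ω)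

theorem entH_eq_neg_sum_logb (U : Ω → α) :
    entH p U = -∑ ω, p ω * Real.logb 2 (rvDist p U (U ω)) := by
  rw [entH, ← Finset.sum_fiberwise Finset.univ U]
  congr 1
  refine Finset.sum_congr rfl fun a _ => ?_
  rw [Finset.sum_congr rfl fun ω hω => by rw [(Finset.mem_filter.1 hω).2], ← Finset.sum_mul,
    Finset.sum_filter]
  rfl

theorem entH_congr {U : Ω → α} {V : Ω → β} (h : ∀ ω ω', U ω = U ω' ↔ V ω = V ω') :
    entH p U = entH p V := by
  simp only [entH_eq_neg_sum_logb, rvDist_congr (h · _)]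

theorem entH_eq_zero_of_forall_eq (hp : IsPMF p) {C : Ω → α} (hC : ∀ ω ω', C ω = C ω') :
    entH p C = 0 := by
  have hdist : ∀ ω, rvDist p C (C ω) = 1 := fun ω => by simp [rvDist, hC _ ω, hp.2]
  simp [entH_eq_neg_sum_logb, hdist]

theorem entH_add_entH_eq_of_mul_eq (hp : ∀ ω, 0 ≤ p ω) {U : Ω → α} {V : Ω → β} {U' : Ω → γ}
    {V' : Ω → δ} (h : ∀ ω, rvDist p U (U ω) * rvDist p V (V ω)
      = rvDist p U' (U' ω) * rvDist p V' (V' ω)) :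
    entH p U + entH p V = entH p U' + entH p V' := by
  simp only [entH_eq_neg_sum_logb, ← neg_add, ← Finset.sum_add_distrib, ← mul_add]
  congr 1
  refine Finset.sum_congr rfl fun ω _ => ?_
  rcases (hp ω).eq_or_lt with h0 | h0
  · simp [← h0]
  · rw [← Real.logb_mul (rvDist_apply_self_pos hp U h0).ne' (rvDist_apply_self_pos hp V h0).ne',
      ← Real.logb_mul (rvDist_apply_self_pos hp U' h0).ne' (rvDist_apply_self_pos hp V' h0).ne',
      h ω]

theorem cmi_comm (A : Ω → α) (B : Ω → β) (C : Ω → γ) : cmi p A B C = cmi p B A C := by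
  simp only [cmi, condH]
  rw [entH_congr (U := fun ω => ((A ω, B ω), C ω)) (V := fun ω => ((B ω, A ω), C ω))
    (fun ω ω' => by simp only [Prod.mk.injEq]; tauto)]
  ring

theorem cmi_congr_right (A : Ω → α) (B : Ω → β) {C : Ω → γ} {C' : Ω → δ}
    (h : ∀ ω ω', C ω = C ω' ↔ C' ω = C' ω') : cmi p A B C = cmi p A B C' := by
  simp only [cmi, condH]
  rw [entH_congr h, entH_congr (U := fun ω => (A ω, C ω)) (V := fun ω => (A ω, C' ω))
      (fun ω ω' => by simp [h ω ω']),
    entH_congr (U := fun ω => (B ω, C ω)) (V := fun ω => (B ω, C' ω))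
      (fun ω ω' => by simp [h ω ω']),
    entH_congr (U := fun ω => ((A ω, B ω), C ω)) (V := fun ω => ((A ω, B ω), C' ω))
      (fun ω ω' => by simp [h ω ω'])]

theorem mi_congr_left {C : Ω → γ} {C' : Ω → δ} (h : ∀ ω ω', C ω = C ω' ↔ C' ω = C' ω')
    (A : Ω → α) : mi p C A = mi p C' A := by
  simp only [mi]
  rw [entH_congr h, entH_congr (U := fun ω => (C ω, A ω)) (V := fun ω => (C' ω, A ω))
    (fun ω ω' => by simp [h ω ω'])]

theorem cmi_eq_mi_prod_sub_mi (A : Ω → α) (B : Ω → β) (C : Ω → γ) :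
    cmi p A B C = mi p (fun ω => (A ω, C ω)) B - mi p C B := by
  simp only [cmi, condH, mi]
  rw [entH_congr (U := fun ω => ((A ω, C ω), B ω)) (V := fun ω => ((A ω, B ω), C ω))
      (fun ω ω' => by simp only [Prod.mk.injEq]; tauto),
    entH_congr (U := fun ω => (C ω, B ω)) (V := fun ω => (B ω, C ω))
      (fun ω ω' => by simp only [Prod.mk.injEq]; tauto)]
  ring

/-- Both sides are chain-rule expansions of `I(A, X₁; X₂ | C)`. -/
theorem cmi_add_cmi_eq_cmi_add_cmi (X₁ : Ω → α) (X₂ : Ω → β) (A : Ω → γ) (C : Ω → δ) :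
    cmi p A X₂ C + cmi p X₁ X₂ (fun ω => (A ω, C ω))
      = cmi p X₁ X₂ C + cmi p A X₂ (fun ω => (C ω, X₁ ω)) := by
  simp only [cmi, condH]
  rw [entH_congr (U := fun ω => (X₂ ω, (A ω, C ω))) (V := fun ω => ((A ω, X₂ ω), C ω))
      (fun ω ω' => by simp only [Prod.mk.injEq]; tauto),
    entH_congr (U := fun ω => (X₂ ω, (C ω, X₁ ω))) (V := fun ω => ((X₁ ω, X₂ ω), C ω))
      (fun ω ω' => by simp only [Prod.mk.injEq]; tauto),
    entH_congr (U := fun ω => (A ω, (C ω, X₁ ω))) (V := fun ω => (X₁ ω, (A ω, C ω)))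
      (fun ω ω' => by simp only [Prod.mk.injEq]; tauto),
    entH_congr (U := fun ω => ((X₁ ω, X₂ ω), (A ω, C ω)))
      (V := fun ω => ((A ω, X₂ ω), (C ω, X₁ ω)))
      (fun ω ω' => by simp only [Prod.mk.injEq]; tauto),
    entH_congr (U := fun ω => (C ω, X₁ ω)) (V := fun ω => (X₁ ω, C ω))
      (fun ω ω' => by simp only [Prod.mk.injEq]; tauto)]
  ring

theorem cmi_eq_mi_of_forall_eq (hp : IsPMF p) (A : Ω → α) (B : Ω → β) {C : Ω → γ}
    (hC : ∀ ω ω', C ω = C ω') : cmi p A B C = mi p A B := by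
  simp only [cmi, condH, mi]
  rw [entH_eq_zero_of_forall_eq hp hC,
    entH_congr (U := fun ω => (A ω, C ω)) (V := A) (fun ω ω' => by simp [hC ω ω']),
    entH_congr (U := fun ω => (B ω, C ω)) (V := B) (fun ω ω' => by simp [hC ω ω']),
    entH_congr (U := fun ω => ((A ω, B ω), C ω)) (V := fun ω => (A ω, B ω))
      (fun ω ω' => by simp [hC ω ω'])]
  ring

theorem mi_eq_zero_of_forall_eq (hp : IsPMF p) {C : Ω → γ} (hC : ∀ ω ω', C ω = C ω')
    (A : Ω → α) : mi p C A = 0 := by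
  simp only [mi]
  rw [entH_eq_zero_of_forall_eq hp hC,
    entH_congr (U := fun ω => (C ω, A ω)) (V := A) (fun ω ω' => by simp [hC ω ω'])]
  ring

theorem Markov.cmi_eq_zero (hp : ∀ ω, 0 ≤ p ω) {A : Ω → α} {B : Ω → β} {C : Ω → γ}
    (h : Markov p A B C) : cmi p A C B = 0 := by
  have key := entH_add_entH_eq_of_mul_eq hp (U := fun ω => (A ω, B ω))
    (V := fun ω => (C ω, B ω)) (U' := fun ω => ((A ω, C ω), B ω)) (V' := B) fun ω => by
      have hABC : rvDist p (fun ω' => ((A ω', B ω'), C ω')) ((A ω, B ω), C ω)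
          = rvDist p (fun ω' => ((A ω', C ω'), B ω')) ((A ω, C ω), B ω) :=
        rvDist_congr fun ω' => by simp only [Prod.mk.injEq]; tauto
      have hBC : rvDist p (fun ω' => (B ω', C ω')) (B ω, C ω)
          = rvDist p (fun ω' => (C ω', B ω')) (C ω, B ω) :=
        rvDist_congr fun ω' => by simp only [Prod.mk.injEq]; tauto
      linarith [hABC ▸ hBC ▸ h (A ω) (B ω) (C ω)]
  simp only [cmi, condH]
  linarith

theorem cmi_eq_cmi_sub_cmi_of_markov (hp : ∀ ω, 0 ≤ p ω) {A : Ω → α} {X₁ : Ω → β}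
    {X₂ : Ω → γ} {C : Ω → δ} (h : Markov p A (fun ω => (C ω, X₁ ω)) X₂) :
    cmi p A X₂ C = cmi p X₁ X₂ C - cmi p X₁ X₂ (fun ω => (A ω, C ω)) := by
  linarith [cmi_add_cmi_eq_cmi_add_cmi (p := p) X₁ X₂ A C, h.cmi_eq_zero hp]

section Rounds

variable {r : ℕ} {𝓕 : Fin r → Type*} [∀ i, Fintype (𝓕 i)] [∀ i, DecidableEq (𝓕 i)]
  (F : ∀ i : Fin r, Ω → 𝓕 i)

theorem cmi_fpre_succ (A : Ω → α) (B : Ω → β) (i : Fin r) :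
    cmi p A B (Fpre F (i + 1)) = cmi p A B (fun ω => (F i ω, Fpre F i ω)) :=
  cmi_congr_right A B fun ω ω' => by rw [fpre_succ_eq_iff, Prod.mk.injEq]

theorem cmi_fpre_eq_mi_fpre_succ_sub (W : Ω → α) (i : Fin r) :
    cmi p (F i) W (Fpre F i) = mi p (Fpre F (i + 1)) W - mi p (Fpre F i) W := by
  rw [cmi_eq_mi_prod_sub_mi, mi_congr_left (C' := Fpre F (i + 1))
    fun ω ω' => by rw [Prod.mk.injEq, fpre_succ_eq_iff]]

theorem sum_cmi_fpre_sub_cmi_fpre (hp : IsPMF p) (X₁ : Ω → α) (X₂ : Ω → β) (W : Ω → γ)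
    (hMarkov : ∀ i : Fin r,
      (Even (i : ℕ) → Markov p (F i) (fun ω => (Fpre F (i : ℕ) ω, X₁ ω)) X₂) ∧
      (¬ Even (i : ℕ) → Markov p (F i) (fun ω => (Fpre F (i : ℕ) ω, X₂ ω)) X₁)) :
    ∑ i : Fin r,
        ((if Even (i : ℕ) then cmi p (F i) X₂ (Fpre F i) else cmi p (F i) X₁ (Fpre F i))
          - cmi p (F i) W (Fpre F i))
      = mi p X₁ X₂ - cmi p X₁ X₂ (Fpre F r) - mi p (Fpre F r) W := by
  set f : ℕ → ℝ := fun k => cmi p X₁ X₂ (Fpre F k)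
  set g : ℕ → ℝ := fun k => mi p (Fpre F k) W
  have hround (i : Fin r) :
      (if Even (i : ℕ) then cmi p (F i) X₂ (Fpre F i) else cmi p (F i) X₁ (Fpre F i))
        - cmi p (F i) W (Fpre F i) = (f i - f (i + 1)) - (g (i + 1) - g i) := by
    rw [cmi_fpre_eq_mi_fpre_succ_sub F W i]
    congr 1
    simp only [f, cmi_fpre_succ F X₁ X₂ i]
    split_ifs with hi
    · exact cmi_eq_cmi_sub_cmi_of_markov hp.1 ((hMarkov i).1 hi)
    · rw [cmi_comm X₁, cmi_comm X₁]
      exact cmi_eq_cmi_sub_cmi_of_markov hp.1 ((hMarkov i).2 hi)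
  rw [Finset.sum_congr rfl fun i _ => hround i,
    Fin.sum_univ_eq_sum_range (fun k => (f k - f (k + 1)) - (g (k + 1) - g k)),
    Finset.sum_sub_distrib, Finset.sum_range_sub', Finset.sum_range_sub]
  simp only [f, g, cmi_eq_mi_of_forall_eq hp _ _ (fpre_zero_eq F),
    mi_eq_zero_of_forall_eq hp (fpre_zero_eq F)]
  ring

end Rounds

end InfoTheory

/-- Under the Markov chains `F_i - F_{[1:i-1]} X_{(i)_2} - X_{(i+1)_2}`
(rounds indexed by `i : Fin r`, `i` corresponding to round `i+1`, so odd rounds are those with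
`Even (i : ℕ)`), for any further random variable `W`:
`∑_{i=1}^r (I(F_i;X_{(i+1)_2}|F_{[1:i-1]}) - I(F_i;W|F_{[1:i-1]}))
  = I(X_1;X_2) - I(X_1;X_2|F_{[1:r]}) - I(F_{[1:r]};W)`;
in particular, taking `W = (Z,S)`, the achievable key rate of the simultaneous simulation and
key-generation theorem satisfies
`R_0 + ∑_{i=1}^r (I(F_i;X_{(i+1)_2}|F_{[1:i-1]}) - I(F_i;Z,S|F_{[1:i-1]}))
  = R_0 + I(X_1;X_2) - I(X_1;X_2|F_{[1:r]}) - I(F_{[1:r]};Z,S)`. -/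
theorem sum_cmi_sub_cmi_eq_mi_sub
    {Ω 𝒳₁ 𝒳₂ 𝒲 𝒵 𝒮 : Type*} [Fintype Ω] [Fintype 𝒳₁] [DecidableEq 𝒳₁]
    [Fintype 𝒳₂] [DecidableEq 𝒳₂] [Fintype 𝒲] [DecidableEq 𝒲]
    [Fintype 𝒵] [DecidableEq 𝒵] [Fintype 𝒮] [DecidableEq 𝒮] {r : ℕ}
    {𝓕 : Fin r → Type*} [∀ i, Fintype (𝓕 i)] [∀ i, DecidableEq (𝓕 i)]
    (p : Ω → ℝ) (hp : IsPMF p)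
    (X1 : Ω → 𝒳₁) (X2 : Ω → 𝒳₂) (W : Ω → 𝒲) (Z : Ω → 𝒵) (S : Ω → 𝒮)
    (F : ∀ i : Fin r, Ω → 𝓕 i)
    (hMarkov : ∀ i : Fin r,
      (Even (i : ℕ) →
        Markov p (F i) (fun ω => (Fpre F (i : ℕ) ω, X1 ω)) X2) ∧
      (¬ Even (i : ℕ) →
        Markov p (F i) (fun ω => (Fpre F (i : ℕ) ω, X2 ω)) X1)) :
    ((∑ i : Fin r,
        ((if Even (i : ℕ) then cmi p (F i) X2 (Fpre F (i : ℕ))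
          else cmi p (F i) X1 (Fpre F (i : ℕ)))
          - cmi p (F i) W (Fpre F (i : ℕ))))
      = mi p X1 X2 - cmi p X1 X2 (Fpre F r) - mi p (Fpre F r) W)
    ∧ ∀ R0 : ℝ,
      (R0 + ∑ i : Fin r,
          ((if Even (i : ℕ) then cmi p (F i) X2 (Fpre F (i : ℕ))
            else cmi p (F i) X1 (Fpre F (i : ℕ)))
            - cmi p (F i) (fun ω => (Z ω, S ω)) (Fpre F (i : ℕ))))
        = R0 + (mi p X1 X2 - cmi p X1 X2 (Fpre F r)
            - mi p (Fpre F r) (fun ω => (Z ω, S ω))) :=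
  ⟨sum_cmi_fpre_sub_cmi_fpre F hp X1 X2 W hMarkov, fun R0 => by
    rw [sum_cmi_fpre_sub_cmi_fpre F hp X1 X2 (fun ω => (Z ω, S ω)) hMarkov]⟩
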